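/- Let G be a sparsifiable finite simple graph and let H be a finite simple graph of minimum degree at least 3. If G contains H as a minor, then G contains H as an induced minor. -/

import Mathlib

/-!
Take a minor model of `H` in `G` that uses as few vertices as possible and, among those, has as
few wasted edges as possible: edges of `G` between the branch sets of two non-adjacent vertices
of `H`. Suppose `ab` is wasted, with `a ∈ X u` and `b ∈ X v`. As `G` has maximum degree 3 and `H`
minimum degree 3, `a` cannot be alone in `X u`; as `a` cannot be deleted from `X u`, it has,
besides a neighbour in `X u`, a second neighbour in `X u` or in some `X w` with `uw ∈ E(H)`. So
`a` has degree 3 and its neighbours other than `b` lie in branch sets of the closed neighbourhood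
of `u`; likewise for `b`. Sparsifiability of `a` now gives a common neighbour `c` of `a` and `b`,
which must lie in some `X w` with `w` adjacent to both `u` and `v`. Moving `a` from `X u` to `X w`
yields a minor model on the same vertices with fewer wasted edges.
-/

namespace Paper

open SimpleGraph

/-- `(T, β)` is a tree decomposition of `G`. -/
def IsTreeDecomp {V ι : Type} (G : SimpleGraph V) (T : SimpleGraph ι) (β : ι → Set V) : Prop :=
  T.Connected ∧ T.IsAcyclic ∧
  (∀ v : V, ∃ i, v ∈ β i) ∧
  (∀ u v : V, G.Adj u v → ∃ i, u ∈ β i ∧ v ∈ β i) ∧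
  (∀ v : V, (SimpleGraph.induce {i | v ∈ β i} T).Connected)

/-- The treewidth of `G`: the least `w` admitting a tree decomposition
with all bags of size at most `w + 1`. -/
noncomputable def treewidth {V : Type} (G : SimpleGraph V) : ℕ :=
  sInf {w | ∃ (ι : Type) (T : SimpleGraph ι) (β : ι → Set V),
    IsTreeDecomp G T β ∧ ∀ i, (β i).ncard ≤ w + 1}

/-- `X` is a minor model of `H` in `G`. -/
def IsMinorModel {V W : Type} (G : SimpleGraph V) (H : SimpleGraph W) (X : W → Set V) : Prop :=
  Pairwise (fun u v => Disjoint (X u) (X v)) ∧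
  (∀ w : W, (SimpleGraph.induce (X w) G).Connected) ∧
  (∀ u v : W, H.Adj u v → ∃ a ∈ X u, ∃ b ∈ X v, G.Adj a b)

/-- `X` is an induced minor model of `H` in `G`. -/
def IsInducedMinorModel {V W : Type} (G : SimpleGraph V) (H : SimpleGraph W)
    (X : W → Set V) : Prop :=
  IsMinorModel G H X ∧
  ∀ u v : W, u ≠ v → ¬ H.Adj u v → ∀ a ∈ X u, ∀ b ∈ X v, ¬ G.Adj a b

def ContainsMinor {V W : Type} (G : SimpleGraph V) (H : SimpleGraph W) : Prop :=
  ∃ X : W → Set V, IsMinorModel G H X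

def ContainsInducedMinor {V W : Type} (G : SimpleGraph V) (H : SimpleGraph W) : Prop :=
  ∃ X : W → Set V, IsInducedMinorModel G H X

/-- The `k × k` grid graph. -/
def grid (k : ℕ) : SimpleGraph (Fin k × Fin k) where
  Adj u v := Nat.dist u.1.val v.1.val + Nat.dist u.2.val v.2.val = 1
  symm := ⟨by intro u v h; simpa [Nat.dist_comm] using h⟩
  loopless := ⟨by intro u h; simp [Nat.dist_self] at h⟩

/-- A vertex `v` is sparsifiable in `G`. -/
def SparsifiableVertex {V : Type} (G : SimpleGraph V) (v : V) : Prop :=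
  (G.neighborSet v).ncard ≤ 2 ∨
  ((G.neighborSet v).ncard = 3 ∧ ∀ u ∈ G.neighborSet v, (G.neighborSet u).ncard ≤ 2) ∨
  (∃ u w₁ w₂ : V, u ≠ w₁ ∧ u ≠ w₂ ∧ w₁ ≠ w₂ ∧ G.neighborSet v = {u, w₁, w₂} ∧
    (G.neighborSet u).ncard ≤ 2 ∧ G.Adj w₁ w₂)

/-- A graph is sparsifiable if all of its vertices are. -/
def Sparsifiable {V : Type} (G : SimpleGraph V) : Prop := ∀ v : V, SparsifiableVertex G v

/-- `I` is a distance-5 independent set in `G`. -/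
def Dist5Indep {V : Type} (G : SimpleGraph V) (I : Set V) : Prop :=
  ∀ u ∈ I, ∀ v ∈ I, u ≠ v → ∀ p : G.Walk u v, 5 ≤ p.length

section GraphFacts

variable {V : Type} {G : SimpleGraph V}

lemma SparsifiableVertex.ncard_neighborSet_le_three {v : V} (hv : SparsifiableVertex G v) :
    (G.neighborSet v).ncard ≤ 3 := by
  rcases hv with h | ⟨h, -⟩ | ⟨u, w₁, w₂, -, -, -, hN, -, -⟩
  · omega
  · omega
  · rw [hN]
    exact (Set.ncard_insert_le _ _).trans (Nat.succ_le_succ <|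
      (Set.ncard_insert_le _ _).trans (by rw [Set.ncard_singleton]))

lemma neighborSet_eq_of_ncard_le_three [Finite V] {x a b c : V}
    (hx : (G.neighborSet x).ncard ≤ 3) (ha : G.Adj x a) (hb : G.Adj x b) (hc : G.Adj x c)
    (hab : a ≠ b) (hac : a ≠ c) (hbc : b ≠ c) :
    G.neighborSet x = {a, b, c} :=
  (Set.eq_of_subset_of_ncard_le (by simp [Set.insert_subset_iff, ha, hb, hc])
    (by rwa [Set.ncard_eq_three.2 ⟨a, b, c, hab, hac, hbc, rfl⟩])).symm

lemma SparsifiableVertex.exists_common_adj {a b : V} (ha : SparsifiableVertex G a)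
    (hab : G.Adj a b) (hda : 2 < (G.neighborSet a).ncard) (hdb : 2 < (G.neighborSet b).ncard) :
    ∃ c, G.Adj a c ∧ G.Adj b c := by
  rcases ha with h | ⟨-, h⟩ | ⟨u, w₁, w₂, -, -, -, hN, hu, hw⟩
  · omega
  · exact absurd (h b hab) (by omega)
  · have hb : b ∈ G.neighborSet a := hab
    have hw₁ : w₁ ∈ G.neighborSet a := by simp [hN]
    have hw₂ : w₂ ∈ G.neighborSet a := by simp [hN]
    rw [hN] at hb
    rcases hb with rfl | rfl | rfl
    · omega
    · exact ⟨w₂, hw₂, hw⟩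
    · exact ⟨w₁, hw₁, hw.symm⟩

lemma exists_adj_mem_of_connected_induce {S : Set V} {x z : V} (hS : (G.induce S).Connected)
    (hx : x ∈ S) (hz : z ∈ S) (hzx : z ≠ x) : ∃ t ∈ S, G.Adj x t :=
  have : Nontrivial S := ⟨⟨x, hx⟩, ⟨z, hz⟩, fun h => hzx (congrArg Subtype.val h).symm⟩
  let ⟨t, ht⟩ := hS.preconnected.exists_adj_of_nontrivial ⟨x, hx⟩
  ⟨t, t.2, ht⟩

lemma connected_induce_insert {S : Set V} {a c : V} (hS : (G.induce S).Connected) (hc : c ∈ S)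
    (hac : G.Adj a c) : (G.induce (insert a S)).Connected := by
  rw [Set.insert_eq]
  exact connected_induce_union Preconnected.of_subsingleton hS.preconnected rfl hc hac

lemma connected_induce_diff_singleton {S : Set V} {x t : V} (hS : (G.induce S).Connected)
    (ht : t ∈ S) (hxt : G.Adj x t) (huniq : ∀ y ∈ S, G.Adj x y → y = t) :
    (G.induce (S \ {x})).Connected := by
  have hleaf : ((G.induce S).induce {v | v.1 ≠ x}).Preconnected :=
    hS.preconnected.induce_of_degree_eq_one fun v hv y hy z hz => by
      obtain rfl : v.1 = x := not_not.1 hv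
      exact Subtype.ext ((huniq y.1 y.2 hy).trans (huniq z.1 z.2 hz).symm)
  let f : (G.induce S).induce {v | v.1 ≠ x} →g G.induce (S \ {x}) :=
    { toFun := fun v => ⟨v.1.1, v.1.2, v.2⟩, map_rel' := id }
  refine (connected_iff _).2 ⟨hleaf.map f ?_, ⟨t, ht, hxt.ne'⟩⟩
  rintro ⟨y, hyS, hyx⟩
  exact ⟨⟨⟨y, hyS⟩, hyx⟩, rfl⟩

end GraphFacts

section MinorModels

variable {V W : Type} {G : SimpleGraph V} {H : SimpleGraph W} {X : W → Set V}

lemma IsMinorModel.eq_of_mem (hX : IsMinorModel G H X) {p q : W} {z : V} (hp : z ∈ X p)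
    (hq : z ∈ X q) : p = q :=
  by_contra fun h => Set.disjoint_left.1 (hX.1 h) hp hq

lemma IsMinorModel.ne_of_mem (hX : IsMinorModel G H X) {p q : W} {y z : V} (hy : y ∈ X p)
    (hz : z ∈ X q) (hpq : p ≠ q) : y ≠ z := by
  rintro rfl
  exact hpq (hX.eq_of_mem hy hz)

def wastedEdges (G : SimpleGraph V) (H : SimpleGraph W) (X : W → Set V) : Set (V × V) :=
  {e | ∃ p q, p ≠ q ∧ ¬ H.Adj p q ∧ e.1 ∈ X p ∧ e.2 ∈ X q ∧ G.Adj e.1 e.2}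

def closedNbhdSupport (H : SimpleGraph W) (X : W → Set V) (p : W) : Set V :=
  {z | ∃ w, (w = p ∨ H.Adj p w) ∧ z ∈ X w}

lemma mem_closedNbhdSupport_of_mem {p : W} {z : V} (hz : z ∈ X p) :
    z ∈ closedNbhdSupport H X p :=
  ⟨p, Or.inl rfl, hz⟩

lemma IsMinorModel.notMem_closedNbhdSupport (hX : IsMinorModel G H X) {p q : W} {y : V}
    (hy : y ∈ X q) (hpq : p ≠ q) (hnpq : ¬ H.Adj p q) : y ∉ closedNbhdSupport H X p := by
  rintro ⟨w, rfl | hpw, hyw⟩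
  · exact hpq (hX.eq_of_mem hyw hy)
  · exact hnpq (hX.eq_of_mem hyw hy ▸ hpw)

lemma IsMinorModel.exists_common_adj_of_mem_closedNbhdSupport (hX : IsMinorModel G H X)
    {u v : W} {c : V} (hu : c ∈ closedNbhdSupport H X u) (hv : c ∈ closedNbhdSupport H X v)
    (huv : u ≠ v) (hnuv : ¬ H.Adj u v) : ∃ w, H.Adj u w ∧ H.Adj v w ∧ c ∈ X w := by
  obtain ⟨w, rfl | huw, hcw⟩ := hu
  · exact absurd hv (hX.notMem_closedNbhdSupport hcw huv.symm fun h => hnuv h.symm)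
  obtain ⟨w', rfl | hvw', hcw'⟩ := hv
  · exact absurd (hX.eq_of_mem hcw hcw' ▸ huw) hnuv
  · exact ⟨w, huw, hX.eq_of_mem hcw' hcw ▸ hvw', hcw⟩

noncomputable def modelCost (G : SimpleGraph V) (H : SimpleGraph W) (X : W → Set V) : ℕ ×ₗ ℕ :=
  toLex ((⋃ w, X w).ncard, (wastedEdges G H X).ncard)

def IsOptimalMinorModel (G : SimpleGraph V) (H : SimpleGraph W) (X : W → Set V) : Prop :=
  IsMinorModel G H X ∧ ∀ Y, IsMinorModel G H Y → modelCost G H X ≤ modelCost G H Y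

lemma exists_isOptimalMinorModel (h : ContainsMinor G H) : ∃ X, IsOptimalMinorModel G H X := by
  obtain ⟨X, hX, hmin⟩ := (InvImage.wf (modelCost G H) wellFounded_lt).has_min
    {X | IsMinorModel G H X} h
  exact ⟨X, hX, fun Y hY => not_lt.1 (hmin Y hY)⟩

lemma IsMinorModel.diff_singleton (hX : IsMinorModel G H X) {p : W} {x t : V} (hx : x ∈ X p)
    (ht : t ∈ X p) (hxt : G.Adj x t) (huniq : ∀ y ∈ X p, G.Adj x y → y = t)
    (hedge : ∀ w, H.Adj p w → ∃ y ∈ X p \ {x}, ∃ z ∈ X w, G.Adj y z) :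
    IsMinorModel G H (fun r => X r \ {x}) := by
  have hother : ∀ r, r ≠ p → X r \ {x} = X r := fun r hr =>
    Set.sdiff_singleton_eq_self fun hxr => hr (hX.eq_of_mem hxr hx)
  refine ⟨fun r s hrs => (hX.1 hrs).mono Set.sdiff_subset Set.sdiff_subset, fun r => ?_,
    fun r s hrs => ?_⟩
  · show (G.induce (X r \ {x})).Connected
    by_cases hr : r = p
    · subst hr
      exact connected_induce_diff_singleton (hX.2.1 r) ht hxt huniq
    · rw [hother r hr]
      exact hX.2.1 r
  · show ∃ a ∈ X r \ {x}, ∃ b ∈ X s \ {x}, G.Adj a b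
    by_cases hr : r = p
    · subst hr
      simpa only [hother s hrs.ne'] using hedge s hrs
    by_cases hs : s = p
    · subst hs
      obtain ⟨y, hy, z, hz, hyz⟩ := hedge r hrs.symm
      exact ⟨z, by rwa [hother r hr], y, hy, hyz.symm⟩
    · simpa only [hother r hr, hother s hs] using hX.2.2 r s hrs

lemma modelCost_diff_singleton_lt (G : SimpleGraph V) (H : SimpleGraph W) [Finite V] {p : W} {x : V}
    (hx : x ∈ X p) : modelCost G H (fun r => X r \ {x}) < modelCost G H X := by
  refine Prod.Lex.toLex_lt_toLex.2 (Or.inl ?_)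
  rw [← Set.iUnion_sdiff]
  exact Set.ncard_sdiff_singleton_lt_of_mem (Set.mem_iUnion_of_mem p hx)

end MinorModels

section Reassign

variable {V W : Type} {G : SimpleGraph V} {H : SimpleGraph W} {X : W → Set V}

def reassign (X : W → Set V) (a : V) (w : W) : W → Set V :=
  fun r => {z | z = a ∧ r = w ∨ z ≠ a ∧ z ∈ X r}

lemma mem_reassign {a z : V} {w r : W} :
    z ∈ reassign X a w r ↔ z = a ∧ r = w ∨ z ≠ a ∧ z ∈ X r :=
  Iff.rfl

lemma reassign_self (a : V) (w : W) : reassign X a w w = insert a (X w) := by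
  ext z
  by_cases hz : z = a <;> simp [mem_reassign, hz]

lemma reassign_of_ne {w r : W} (a : V) (hr : r ≠ w) : reassign X a w r = X r \ {a} := by
  ext z
  simp [mem_reassign, hr, and_comm]

lemma iUnion_reassign {a : V} {u w : W} (ha : a ∈ X u) :
    ⋃ r, reassign X a w r = ⋃ r, X r := by
  ext z
  simp only [Set.mem_iUnion, mem_reassign]
  by_cases hz : z = a
  · subst hz
    simpa using ⟨u, ha⟩
  · simp [hz]

variable {u v w : W} {a t b c : V}

lemma IsMinorModel.isMinorModel_reassign (hX : IsMinorModel G H X) (ha : a ∈ X u) (ht : t ∈ X u)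
    (hb : b ∈ X v) (hc : c ∈ X w) (hNa : G.neighborSet a = {t, b, c}) (huv : u ≠ v)
    (hnuv : ¬ H.Adj u v) (huw : H.Adj u w) : IsMinorModel G H (reassign X a w) := by
  have hN : ∀ z, G.Adj a z → z = t ∨ z = b ∨ z = c := fun z hz => by
    simpa [hNa] using (show z ∈ G.neighborSet a from hz)
  have hat : G.Adj a t := show t ∈ G.neighborSet a by simp [hNa]
  have hac : G.Adj a c := show c ∈ G.neighborSet a by simp [hNa]
  have hmem : ∀ r z, z ∈ X r → z ≠ a → z ∈ reassign X a w r := fun r z hz hza =>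
    mem_reassign.2 (Or.inr ⟨hza, hz⟩)
  have hta : t ≠ a := hat.ne'
  have hfrom : ∀ s z, H.Adj u s → z ∈ X s → G.Adj a z → s = w := by
    intro s z hus hz haz
    rcases hN z haz with rfl | rfl | rfl
    · exact absurd (hX.eq_of_mem ht hz ▸ hus) (H.loopless.irrefl u)
    · exact absurd (hX.eq_of_mem hb hz ▸ hus) hnuv
    · exact hX.eq_of_mem hz hc
  refine ⟨fun r s hrs => Set.disjoint_left.2 fun z hzr hzs => ?_, fun r => ?_,
    fun r s hrs => ?_⟩
  · rcases mem_reassign.1 hzr with ⟨rfl, rfl⟩ | ⟨hza, hzr⟩ <;>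
      rcases mem_reassign.1 hzs with ⟨hza', rfl⟩ | ⟨hza', hzs⟩
    exacts [hrs rfl, hza' rfl, hza hza', hrs (hX.eq_of_mem hzr hzs)]
  · by_cases hrw : r = w
    · subst hrw
      rw [reassign_self]
      exact connected_induce_insert (hX.2.1 r) hc hac
    rw [reassign_of_ne a hrw]
    by_cases hru : r = u
    · subst hru
      refine connected_induce_diff_singleton (hX.2.1 r) ht hat fun y hy hay => ?_
      rcases hN y hay with rfl | rfl | rfl
      exacts [rfl, absurd (hX.eq_of_mem hy hb) huv, absurd (hX.eq_of_mem hy hc) hrw]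
    · rw [Set.sdiff_singleton_eq_self fun har => hru (hX.eq_of_mem har ha)]
      exact hX.2.1 r
  · obtain ⟨y, hy, z, hz, hyz⟩ := hX.2.2 r s hrs
    by_cases hya : y = a
    · subst hya
      obtain rfl := hX.eq_of_mem hy ha
      obtain rfl := hfrom s z hrs hz hyz
      exact ⟨t, hmem _ _ ht hta, y, mem_reassign.2 (Or.inl ⟨rfl, rfl⟩), hat.symm⟩
    by_cases hza : z = a
    · subst hza
      obtain rfl := hX.eq_of_mem hz ha
      obtain rfl := hfrom r y hrs.symm hy hyz.symm
      exact ⟨z, mem_reassign.2 (Or.inl ⟨rfl, rfl⟩), t, hmem _ _ ht hta, hat⟩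
    exact ⟨y, hmem r y hy hya, z, hmem s z hz hza, hyz⟩

lemma IsMinorModel.wastedEdges_reassign_ssubset (hX : IsMinorModel G H X) (ha : a ∈ X u)
    (ht : t ∈ X u) (hb : b ∈ X v) (hc : c ∈ X w) (hNa : G.neighborSet a = {t, b, c})
    (huv : u ≠ v) (hnuv : ¬ H.Adj u v) (huw : H.Adj u w) (hvw : H.Adj v w) :
    wastedEdges G H (reassign X a w) ⊂ wastedEdges G H X := by
  have hN : ∀ z, G.Adj a z → z = t ∨ z = b ∨ z = c := fun z hz => by
    simpa [hNa] using (show z ∈ G.neighborSet a from hz)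
  have hnear : ∀ r z, G.Adj a z → z ∈ reassign X a w r → r = w ∨ H.Adj w r := by
    intro r z haz hz
    obtain ⟨-, hz⟩ := (mem_reassign.1 hz).resolve_left fun h => haz.ne h.1.symm
    rcases hN z haz with rfl | rfl | rfl
    · exact Or.inr (hX.eq_of_mem ht hz ▸ huw.symm)
    · exact Or.inr (hX.eq_of_mem hb hz ▸ hvw.symm)
    · exact Or.inl (hX.eq_of_mem hz hc)
  have hnotwasted : ∀ r s z, r ≠ s → ¬ H.Adj r s → a ∈ reassign X a w r →
      z ∈ reassign X a w s → ¬ G.Adj a z := by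
    intro r s z hrs hnrs har hzs haz
    obtain rfl : r = w := by simpa using mem_reassign.1 har
    exact (hnear s z haz hzs).elim (Ne.symm hrs) hnrs
  refine (Set.ssubset_iff_of_subset ?_).2 ⟨(a, b), ⟨u, v, huv, hnuv, ha, hb, ?_⟩, ?_⟩
  · rintro ⟨y, z⟩ ⟨r, s, hrs, hnrs, hy, hz, hyz⟩
    by_cases hya : y = a
    · subst hya
      exact absurd hyz (hnotwasted r s z hrs hnrs hy hz)
    by_cases hza : z = a
    · subst hza
      exact absurd hyz.symm (hnotwasted s r y (Ne.symm hrs) (fun h => hnrs h.symm) hz hy)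
    exact ⟨r, s, hrs, hnrs, (mem_reassign.1 hy).resolve_left (hya ∘ And.left) |>.2,
      (mem_reassign.1 hz).resolve_left (hza ∘ And.left) |>.2, hyz⟩
  · exact show b ∈ G.neighborSet a by simp [hNa]
  · rintro ⟨r, s, hrs, hnrs, har, hbs, hab⟩
    exact hnotwasted r s b hrs hnrs har hbs hab

lemma IsMinorModel.modelCost_reassign_lt [Finite V] (hX : IsMinorModel G H X) (ha : a ∈ X u)
    (ht : t ∈ X u) (hb : b ∈ X v) (hc : c ∈ X w) (hNa : G.neighborSet a = {t, b, c})
    (huv : u ≠ v) (hnuv : ¬ H.Adj u v) (huw : H.Adj u w) (hvw : H.Adj v w) :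
    modelCost G H (reassign X a w) < modelCost G H X :=
  Prod.Lex.toLex_lt_toLex.2 <| Or.inr ⟨by rw [iUnion_reassign ha],
    Set.ncard_lt_ncard (hX.wastedEdges_reassign_ssubset ha ht hb hc hNa huv hnuv huw hvw)⟩

end Reassign

section Optimal

variable {V W : Type} [Finite V] {G : SimpleGraph V} {H : SimpleGraph W} {X : W → Set V}
  {p q : W} {x y : V}

lemma IsMinorModel.exists_adj_mem_of_wasted (hX : IsMinorModel G H X)
    (hH : 3 ≤ (H.neighborSet p).ncard) (hdeg : (G.neighborSet x).ncard ≤ 3)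
    (hx : x ∈ X p) (hy : y ∈ X q) (hnpq : ¬ H.Adj p q) (hxy : G.Adj x y) :
    ∃ t ∈ X p, G.Adj x t := by
  by_contra! hnone
  have hXp : ∀ z ∈ X p, z = x := fun z hz => by_contra fun hzx =>
    let ⟨t, ht, hxt⟩ := exists_adj_mem_of_connected_induce (hX.2.1 p) hx hz hzx
    hnone t ht hxt
  have hreach : ∀ w, H.Adj p w → ∃ z ∈ X w, G.Adj x z := fun w hpw => by
    obtain ⟨x', hx', z, hz, hxz⟩ := hX.2.2 p w hpw
    exact ⟨z, hz, hXp x' hx' ▸ hxz⟩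
  obtain ⟨w₁, w₂, w₃, h₁, h₂, h₃, h₁₂, h₁₃, h₂₃⟩ :=
    (Set.two_lt_ncard_iff (Set.finite_of_ncard_pos (by omega))).1 hH
  obtain ⟨z₁, hz₁, hxz₁⟩ := hreach w₁ h₁
  obtain ⟨z₂, hz₂, hxz₂⟩ := hreach w₂ h₂
  obtain ⟨z₃, hz₃, hxz₃⟩ := hreach w₃ h₃
  have hy' : y ∈ G.neighborSet x := hxy
  rw [neighborSet_eq_of_ncard_le_three hdeg hxz₁ hxz₂ hxz₃ (hX.ne_of_mem hz₁ hz₂ h₁₂)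
    (hX.ne_of_mem hz₁ hz₃ h₁₃) (hX.ne_of_mem hz₂ hz₃ h₂₃)] at hy'
  rcases hy' with rfl | rfl | rfl
  exacts [hnpq (hX.eq_of_mem hz₁ hy ▸ h₁), hnpq (hX.eq_of_mem hz₂ hy ▸ h₂),
    hnpq (hX.eq_of_mem hz₃ hy ▸ h₃)]

lemma IsOptimalMinorModel.exists_two_adj_of_wasted (hX : IsOptimalMinorModel G H X)
    (hH : 3 ≤ (H.neighborSet p).ncard) (hdeg : (G.neighborSet x).ncard ≤ 3)
    (hx : x ∈ X p) (hy : y ∈ X q) (hnpq : ¬ H.Adj p q) (hxy : G.Adj x y) :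
    ∃ t t', t ≠ t' ∧ t ∈ X p ∧ t' ∈ closedNbhdSupport H X p ∧ G.Adj x t ∧ G.Adj x t' := by
  obtain ⟨t, ht, hxt⟩ := hX.1.exists_adj_mem_of_wasted hH hdeg hx hy hnpq hxy
  by_cases h : ∃ t' ∈ X p, G.Adj x t' ∧ t ≠ t'
  · obtain ⟨t', ht', hxt', htt'⟩ := h
    exact ⟨t, t', htt', ht, mem_closedNbhdSupport_of_mem ht', hxt, hxt'⟩
  push Not at h
  suffices ∃ w, H.Adj p w ∧ ∃ c ∈ X w, G.Adj x c by
    obtain ⟨w, hpw, c, hc, hxc⟩ := this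
    exact ⟨t, c, hX.1.ne_of_mem ht hc hpw.ne, ht, ⟨w, Or.inr hpw, hc⟩, hxt, hxc⟩
  by_contra! hfar
  have hdel := hX.1.diff_singleton hx ht hxt (fun y hy hxy => (h y hy hxy).symm) fun w hpw => by
    obtain ⟨y, hy, z, hz, hyz⟩ := hX.1.2.2 p w hpw
    refine ⟨y, ⟨hy, ?_⟩, z, hz, hyz⟩
    rintro (rfl : y = x)
    exact hfar w hpw z hz hyz
  exact (hX.2 _ hdel).not_gt (modelCost_diff_singleton_lt G H hx)

lemma IsOptimalMinorModel.ncard_neighborSet_of_wasted (hX : IsOptimalMinorModel G H X)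
    (hH : 3 ≤ (H.neighborSet p).ncard) (hdeg : (G.neighborSet x).ncard ≤ 3)
    (hx : x ∈ X p) (hy : y ∈ X q) (hpq : p ≠ q) (hnpq : ¬ H.Adj p q) (hxy : G.Adj x y) :
    (G.neighborSet x).ncard = 3 ∧ ∀ z, G.Adj x z → z ≠ y → z ∈ closedNbhdSupport H X p := by
  obtain ⟨t, t', htt', ht, ht', hxt, hxt'⟩ :=
    hX.exists_two_adj_of_wasted hH hdeg hx hy hnpq hxy
  have hyFar := hX.1.notMem_closedNbhdSupport hy hpq hnpq
  have hyt : y ≠ t := fun h => hyFar (h ▸ mem_closedNbhdSupport_of_mem ht)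
  have hyt' : y ≠ t' := fun h => hyFar (h ▸ ht')
  have hNx := neighborSet_eq_of_ncard_le_three hdeg hxy hxt hxt' hyt hyt' htt'
  refine ⟨hNx ▸ Set.ncard_eq_three.2 ⟨y, t, t', hyt, hyt', htt', rfl⟩, fun z hxz hzy => ?_⟩
  have hz : z ∈ G.neighborSet x := hxz
  rw [hNx] at hz
  rcases hz with rfl | rfl | rfl
  exacts [absurd rfl hzy, mem_closedNbhdSupport_of_mem ht, ht']

lemma IsOptimalMinorModel.isInducedMinorModel (hX : IsOptimalMinorModel G H X)
    (hG : Sparsifiable G) (hH : ∀ w, 3 ≤ (H.neighborSet w).ncard) :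
    IsInducedMinorModel G H X := by
  refine ⟨hX.1, fun u v huv hnuv a ha b hb hab => ?_⟩
  have hdeg := fun z => (hG z).ncard_neighborSet_le_three
  obtain ⟨hda, hnearA⟩ := hX.ncard_neighborSet_of_wasted (hH u) (hdeg a) ha hb huv hnuv hab
  obtain ⟨hdb, hnearB⟩ := hX.ncard_neighborSet_of_wasted (hH v) (hdeg b) hb ha huv.symm
    (fun h => hnuv h.symm) hab.symm
  obtain ⟨c, hac, hbc⟩ := (hG a).exists_common_adj hab (by omega) (by omega)
  obtain ⟨w, huw, hvw, hc⟩ := hX.1.exists_common_adj_of_mem_closedNbhdSupport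
    (hnearA c hac hbc.ne') (hnearB c hbc hac.ne') huv hnuv
  obtain ⟨t, ht, hat⟩ := hX.1.exists_adj_mem_of_wasted (hH u) (hdeg a) ha hb hnuv hab
  have hNa := neighborSet_eq_of_ncard_le_three (hdeg a) hat hab hac (hX.1.ne_of_mem ht hb huv)
    (hX.1.ne_of_mem ht hc huw.ne) (hX.1.ne_of_mem hb hc hvw.ne)
  exact (hX.2 _ (hX.1.isMinorModel_reassign ha ht hb hc hNa huv hnuv huw)).not_gt
    (hX.1.modelCost_reassign_lt ha ht hb hc hNa huv hnuv huw hvw)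

end Optimal

theorem inducedMinor_of_minor_of_sparsifiable_general {V W : Type} [Fintype V]
    (G : SimpleGraph V) (H : SimpleGraph W)
    (hG : Sparsifiable G)
    (hH : ∀ w : W, 3 ≤ (H.neighborSet w).ncard)
    (hminor : ContainsMinor G H) :
    ContainsInducedMinor G H := by
  obtain ⟨X, hX⟩ := exists_isOptimalMinorModel hminor
  exact ⟨X, hX.isInducedMinorModel hG hH⟩

theorem inducedMinor_of_minor_of_sparsifiable {V W : Type} [Fintype V] [Fintype W]
    (G : SimpleGraph V) (H : SimpleGraph W)
    (hG : Sparsifiable G)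
    (hH : ∀ w : W, 3 ≤ (H.neighborSet w).ncard)
    (hminor : ContainsMinor G H) :
    ContainsInducedMinor G H :=
  inducedMinor_of_minor_of_sparsifiable_general G H hG hH hminor

end Paper
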